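/- arXiv:2305.17425 — 5 statements merged into one kernel-verified Lean document; each statement's English description precedes it below -/
import Mathlib

section
/- Let R be a commutative ring, I an ideal of R, and e ≥ 1 an integer such that the image of e in R is a unit. Let a, x ∈ R be such that a·x^e − 1 ∈ I. Define x' = x − e⁻¹·x·(a·x^e − 1). Then a·(x')^e − 1 ∈ I². -/
lemma newton_aux (R : Type*) [CommRing R] :
    ∀ (n : ℕ) (u : R), ∃ c : R, (1 - u) ^ n = 1 - (n : R) * u + u ^ 2 * c := by
  intro n
  induction n with
  | zero => intro u; exact ⟨0, by ring⟩
  | succ n ih =>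
    intro u
    obtain ⟨c, hc⟩ := ih u
    refine ⟨c + (n : R) - u * c, ?_⟩
    rw [pow_succ, hc]
    push_cast
    ring

theorem newton_iteration_quadratic_convergence
    (R : Type*) [CommRing R] (I : Ideal R) (e : ℕ) (he : 1 ≤ e)
    (hu : IsUnit (e : R)) (a x : R) (h : a * x ^ e - 1 ∈ I) :
    a * (x - (↑hu.unit⁻¹ : R) * x * (a * x ^ e - 1)) ^ e - 1 ∈ I ^ 2 := by
  set v : R := (↑hu.unit⁻¹ : R) with hvdef
  have hv : (e : R) * v = 1 := by
    have h2 := hu.unit.mul_inv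
    rwa [IsUnit.unit_spec hu, ← hvdef] at h2
  set t : R := a * x ^ e - 1 with htdef
  obtain ⟨c, hc⟩ := newton_aux R e (v * t)
  have hev : (e : R) * (v * t) = t := by rw [← mul_assoc, hv, one_mul]
  rw [hev] at hc
  have hx : a * x ^ e = t + 1 := by rw [htdef]; ring
  have h1 : (x - v * x * t) ^ e = x ^ e * (1 - v * t) ^ e := by
    rw [← mul_pow]; ring_nf
  have key : a * (x - v * x * t) ^ e - 1 = t ^ 2 * ((t + 1) * v ^ 2 * c - 1) := by
    rw [h1, hc]
    linear_combination (1 - t + (v * t) ^ 2 * c) * hx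
  rw [key]
  exact Ideal.mul_mem_right _ _ (Ideal.pow_mem_pow h 2)
end

section
/- Let K/L be an extension of number fields with rings of integers O_K and O_L, let 𝔭 be a nonzero prime ideal of O_L that is inert in K, i.e., 𝔓 = 𝔭O_K is a prime ideal of O_K. Then for every x ∈ O_K, the reduction modulo 𝔭 of the relative norm N_{K/L}(x) equals the norm of the residue field extension applied to the reduction of x: N_{K/L}(x) mod 𝔭 = N_{(O_K/𝔓)/(O_L/𝔭)}(x mod 𝔓). -/
/-!
Both sides can be computed after localizing `𝓞 L` at `p`: this replaces `𝓞 L ⧸ p` by the residue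
field of a discrete valuation ring over which the localization of `𝓞 K` is free. For a free
extension of a local ring, both norms are determinants of the matrix of multiplication by `x` in a
basis and its reduction, and reduction commutes with determinants.
-/

open NumberField IsLocalRing IsLocalization.AtPrime

section

attribute [local instance] Ideal.Quotient.field

variable {R S : Type*} [CommRing R] [CommRing S] [Algebra R S]

lemma Algebra.norm_quotient_mk [IsLocalRing R] [Module.Free R S] [Module.Finite R S] (x : S) :
    Algebra.norm (R ⧸ maximalIdeal R)
      (Ideal.Quotient.mk ((maximalIdeal R).map (algebraMap R S)) x) =
      Ideal.Quotient.mk (maximalIdeal R) (Algebra.norm R x) := by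
  let b := Module.Free.chooseBasis R S
  rw [Algebra.norm_eq_matrix_det b, Algebra.norm_eq_matrix_det (basisQuotient b),
    RingHom.map_det]
  congr 1
  ext i j
  simp only [RingHom.mapMatrix_apply, Matrix.map_apply, Algebra.leftMulMatrix_eq_repr_mul,
    basisQuotient_apply, ← map_mul, basisQuotient_repr]

lemma Algebra.norm_quotient_eq_norm_localization_quotient (p : Ideal R) [p.IsMaximal]
    (Rₚ Sₚ : Type*) [CommRing Rₚ] [CommRing Sₚ] [Algebra R Rₚ] [IsLocalization.AtPrime Rₚ p]
    [IsLocalRing Rₚ] [Algebra S Sₚ] [Algebra R Sₚ] [Algebra Rₚ Sₚ]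
    [IsLocalization (Algebra.algebraMapSubmonoid S p.primeCompl) Sₚ]
    [IsScalarTower R S Sₚ] [IsScalarTower R Rₚ Sₚ] (x : S) :
    Algebra.norm (R ⧸ p) (Ideal.Quotient.mk (p.map (algebraMap R S)) x) =
      (equivQuotMaximalIdeal p Rₚ).symm
        (Algebra.norm (Rₚ ⧸ maximalIdeal Rₚ)
          (Ideal.Quotient.mk ((maximalIdeal Rₚ).map (algebraMap Rₚ Sₚ)) (algebraMap S Sₚ x))) := by
  have : IsScalarTower R (Rₚ ⧸ maximalIdeal Rₚ)
      (Sₚ ⧸ (maximalIdeal Rₚ).map (algebraMap Rₚ Sₚ)) := by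
    apply IsScalarTower.of_algebraMap_eq'
    rw [IsScalarTower.algebraMap_eq R Rₚ (Rₚ ⧸ _), IsScalarTower.algebraMap_eq R Rₚ (Sₚ ⧸ _),
      ← RingHom.comp_assoc, ← IsScalarTower.algebraMap_eq Rₚ]
  rw [Algebra.norm_eq_of_equiv_equiv (equivQuotMaximalIdeal p Rₚ)
    (equivQuotientMapMaximalIdeal S p Rₚ Sₚ)]
  · rfl
  · ext x
    simp only [RingHom.coe_comp, RingHom.coe_coe, Function.comp_apply,
      equivQuotMaximalIdeal_apply_mk, equivQuotientMapMaximalIdeal_apply_mk,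
      Ideal.Quotient.algebraMap_quotient_map_quotient]
    rw [← IsScalarTower.algebraMap_apply, ← IsScalarTower.algebraMap_apply]

open nonZeroDivisors in
lemma Algebra.norm_quotient_eq_of_isDedekindDomain (p : Ideal R) [p.IsMaximal]
    [IsDedekindDomain R] [IsDomain S] [Module.IsTorsionFree R S] [Module.Finite R S]
    [IsIntegrallyClosed S] (x : S) :
    Algebra.norm (R ⧸ p) (Ideal.Quotient.mk (p.map (algebraMap R S)) x) =
      Ideal.Quotient.mk p (Algebra.intNorm R S x) := by
  let Rₚ := Localization.AtPrime p
  let Sₚ := Localization (Algebra.algebraMapSubmonoid S p.primeCompl)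
  let : Algebra Rₚ Sₚ := localizationAlgebra p.primeCompl S
  have : IsScalarTower R Rₚ Sₚ := IsScalarTower.of_algebraMap_eq'
    (by rw [RingHom.algebraMap_toAlgebra, IsLocalization.map_comp, ← IsScalarTower.algebraMap_eq])
  have hS : Algebra.algebraMapSubmonoid S p.primeCompl ≤ S⁰ :=
    Submonoid.map_le_of_le_comap _ <| p.primeCompl_le_nonZeroDivisors.trans
      (nonZeroDivisors_le_comap_nonZeroDivisors_of_injective _
        (FaithfulSMul.algebraMap_injective _ _))
  have : IsDomain Sₚ := IsLocalization.isDomain_of_le_nonZeroDivisors _ hS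
  have : Module.IsTorsionFree Rₚ Sₚ := by
    rw [Module.isTorsionFree_iff_algebraMap_injective, RingHom.injective_iff_ker_eq_bot,
      RingHom.ker_eq_bot_iff_eq_zero]
    simp
  have : Module.Finite Rₚ Sₚ := .of_isLocalization R S p.primeCompl
  have : IsIntegrallyClosed Sₚ := isIntegrallyClosed_of_isLocalization _ _ hS
  have : IsPrincipalIdealRing Rₚ := by
    by_cases hbot : p = ⊥
    · infer_instance
    · have := (IsDedekindDomain.isDedekindDomainDvr R).2 p hbot inferInstance
      infer_instance
  have : Module.Free Rₚ Sₚ := Module.free_of_finite_type_torsion_free'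
  apply (equivQuotMaximalIdeal p Rₚ).injective
  rw [norm_quotient_eq_norm_localization_quotient p Rₚ Sₚ, Algebra.norm_quotient_mk,
    RingEquiv.apply_symm_apply, ← Algebra.intNorm_eq_norm,
    ← Algebra.intNorm_eq_of_isLocalization p.primeCompl (Aₘ := Rₚ) (Bₘ := Sₚ) x]
  rfl

end

theorem norm_commutes_with_reduction_general
    (L K : Type*) [Field L] [NumberField L] [Field K] [NumberField K]
    [Algebra L K] [FiniteDimensional L K]
    (p : Ideal (𝓞 L)) (hp : p.IsPrime) (hbot : p ≠ ⊥)
    (x : 𝓞 K) (n : 𝓞 L)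
    (hn : algebraMap (𝓞 L) L n = Algebra.norm L (algebraMap (𝓞 K) K x)) :
    Ideal.Quotient.mk p n =
      Algebra.norm (𝓞 L ⧸ p)
        (Ideal.Quotient.mk (Ideal.map (algebraMap (𝓞 L) (𝓞 K)) p) x) := by
  have : p.IsMaximal := hp.isMaximal hbot
  have hn_intNorm : n = Algebra.intNorm (𝓞 L) (𝓞 K) x :=
    IsFractionRing.injective (𝓞 L) L (by rw [hn, Algebra.algebraMap_intNorm (L := K)])
  rw [hn_intNorm, Algebra.norm_quotient_eq_of_isDedekindDomain]

theorem norm_commutes_with_reduction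
    (L K : Type*) [Field L] [NumberField L] [Field K] [NumberField K]
    [Algebra L K] [FiniteDimensional L K]
    (p : Ideal (𝓞 L)) (hp : p.IsPrime) (hbot : p ≠ ⊥)
    (hinert : (Ideal.map (algebraMap (𝓞 L) (𝓞 K)) p).IsPrime)
    (x : 𝓞 K) (n : 𝓞 L)
    (hn : algebraMap (𝓞 L) L n = Algebra.norm L (algebraMap (𝓞 K) K x)) :
    Ideal.Quotient.mk p n =
      Algebra.norm (𝓞 L ⧸ p)
        (Ideal.Quotient.mk (Ideal.map (algebraMap (𝓞 L) (𝓞 K)) p) x) :=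
  norm_commutes_with_reduction_general L K p hp hbot x n hn
end

section
/- Let E/F be a finite extension of fields and let e ≥ 1 be an integer such that F contains a primitive e-th root of unity and gcd([E:F], e) = 1. Then for every y ∈ E^* that is an e-th power in E^*, the norm map N_{E/F} induces a bijection from the set {x ∈ E : x^e = y} of roots of X^e − y in E onto the set {z ∈ F : z^e = N_{E/F}(y)} of roots of X^e − N_{E/F}(y) in F. -/
/-!
Fix `x₀` with `x₀ ^ e = y`. Since `F` already contains `e` distinct `e`-th roots of unity, the
roots of `X ^ e - y` in `E` are exactly `x₀ * w` for `w ∈ μ_e(F)`, and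
`N (x₀ * w) = N x₀ * w ^ [E : F]`. As `[E : F]` is prime to `e`, raising to the `[E : F]`-th power
permutes `μ_e(F)`, and `N x₀ * μ_e(F)` is the set of roots of `X ^ e - N y` in `F`.
-/

open Set

theorem bijOn_pow_of_coprime {M : Type*} [Monoid M] {n e : ℕ} (he : e ≠ 0) (hn : n.Coprime e) :
    BijOn (· ^ n) {w : M | w ^ e = 1} {w | w ^ e = 1} := by
  obtain ⟨m, -, hm⟩ := Nat.exists_mul_mod_eq_of_coprime 1 hn he
  have pow_mul_inv {w : M} (hw : w ^ e = 1) : w ^ (n * m) = w := by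
    rw [pow_eq_pow_mod _ hw, hm, ← pow_eq_pow_mod _ hw, pow_one]
  have mapsTo_pow (k : ℕ) : MapsTo (· ^ k) {w : M | w ^ e = 1} {w | w ^ e = 1} :=
    fun w (hw : w ^ e = 1) ↦ by simp [pow_right_comm, hw]
  refine InvOn.bijOn (f' := (· ^ m)) ⟨fun w hw ↦ ?_, fun w hw ↦ ?_⟩ (mapsTo_pow n) (mapsTo_pow m)
  · simpa only [← pow_mul] using pow_mul_inv hw
  · simpa only [← pow_mul, mul_comm m n] using pow_mul_inv hw

theorem bijOn_mul_left_pow_eq_one {K : Type*} [CommGroupWithZero K] {a : K} (ha : a ≠ 0) (e : ℕ) :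
    BijOn (a * ·) {w : K | w ^ e = 1} {x | x ^ e = a ^ e} := by
  refine InvOn.bijOn (f' := (· / a)) ⟨fun w _ ↦ ?_, fun x _ ↦ ?_⟩ (fun w hw ↦ ?_) (fun x hx ↦ ?_)
  · exact mul_div_cancel_left₀ w ha
  · exact mul_div_cancel₀ x ha
  · simp_all [mul_pow]
  · simp_all [div_pow]

theorem IsPrimitiveRoot.bijOn_map_pow_eq_one {K L G : Type*} [CommMonoid K] [CommRing L]
    [IsDomain L] [FunLike G K L] [MonoidHomClass G K L] {f : G} (hf : Function.Injective f)
    {ζ : K} {e : ℕ} [NeZero e] (hζ : IsPrimitiveRoot ζ e) :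
    BijOn f {w : K | w ^ e = 1} {w : L | w ^ e = 1} := by
  refine ⟨fun w (hw : w ^ e = 1) ↦ by simp [← map_pow, hw], hf.injOn, fun w (hw : w ^ e = 1) ↦ ?_⟩
  obtain ⟨i, -, rfl⟩ := (hζ.map_of_injective hf).eq_pow_of_pow_eq_one hw
  exact ⟨ζ ^ i, by simp [pow_right_comm, hζ.pow_eq_one], map_pow f ζ i⟩

theorem norm_bijection_on_roots
    (F E : Type*) [Field F] [Field E] [Algebra F E] [FiniteDimensional F E]
    (e : ℕ) (he : 1 ≤ e) (hζ : ∃ ζ : F, IsPrimitiveRoot ζ e)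
    (hgcd : Nat.gcd (Module.finrank F E) e = 1)
    (y : E) (hy : y ≠ 0) (hpow : ∃ x : E, x ^ e = y) :
    Set.BijOn (Algebra.norm F) {x : E | x ^ e = y}
      {z : F | z ^ e = Algebra.norm F y} := by
  obtain ⟨ζ, hζ⟩ := hζ
  obtain ⟨x₀, rfl⟩ := hpow
  have : NeZero e := ⟨by omega⟩
  have hx₀ : x₀ ≠ 0 := ne_zero_pow (NeZero.ne e) hy
  have hroots : BijOn ((x₀ * ·) ∘ algebraMap F E) {w | w ^ e = 1} {x | x ^ e = x₀ ^ e} :=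
    (bijOn_mul_left_pow_eq_one hx₀ e).comp
      (hζ.bijOn_map_pow_eq_one (algebraMap F E).injective)
  have hnorm_roots : BijOn ((Algebra.norm F x₀ * ·) ∘ (· ^ Module.finrank F E))
      {w | w ^ e = 1} {z | z ^ e = Algebra.norm F (x₀ ^ e)} := by
    rw [map_pow]
    exact (bijOn_mul_left_pow_eq_one (Algebra.norm_ne_zero_iff.mpr hx₀) e).comp
      (bijOn_pow_of_coprime (NeZero.ne e) hgcd)
  have hnorm_comp : Algebra.norm F ∘ ((x₀ * ·) ∘ algebraMap F E) =
      (Algebra.norm F x₀ * ·) ∘ (· ^ Module.finrank F E) := by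
    ext w
    simp
  rw [← hroots.image_eq, ← bijOn_comp_iff hroots.injOn, hnorm_comp]
  exact hnorm_roots
end

section
/- Let E/F be a finite extension of fields of degree n, let e ≥ 1 with gcd(n, e) = 1, and let d be a positive integer with d·n ≡ 1 (mod e). Let y ∈ E^*, let x₀ ∈ E with x₀^e = y, and let a ∈ F with a^e = N_{E/F}(y). Set z = a / N_{E/F}(x₀) ∈ F. Then z^e = 1, and the element x = x₀ · z^d satisfies x^e = y and N_{E/F}(x) = a. -/
theorem couveignes_correction_formula
    (F E : Type*) [Field F] [Field E] [Algebra F E] [FiniteDimensional F E]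
    (e : ℕ) (he : 1 ≤ e) (n : ℕ) (hn : n = Module.finrank F E)
    (hgcd : Nat.gcd n e = 1)
    (d : ℕ) (hd : 0 < d) (hdn : d * n ≡ 1 [MOD e])
    (y : E) (hy : y ≠ 0) (x₀ : E) (hx₀ : x₀ ^ e = y)
    (a : F) (ha : a ^ e = Algebra.norm F y) :
    (a / Algebra.norm F x₀) ^ e = 1 ∧
      (x₀ * algebraMap F E ((a / Algebra.norm F x₀) ^ d)) ^ e = y ∧
      Algebra.norm F (x₀ * algebraMap F E ((a / Algebra.norm F x₀) ^ d)) = a := by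
  have hx0 : x₀ ≠ 0 := by
    rintro rfl
    rw [zero_pow (by omega : e ≠ 0)] at hx₀
    exact hy hx₀.symm
  have hNx0 : Algebra.norm F x₀ ≠ 0 := (Algebra.norm_ne_zero_iff).2 hx0
  set z : F := a / Algebra.norm F x₀ with hzdef
  have hz : z ^ e = 1 := by
    rw [hzdef, div_pow, ha, ← hx₀, map_pow, div_self (pow_ne_zero _ hNx0)]
  have key : ∀ m : ℕ, z ^ m = z ^ (m % e) := by
    intro m
    conv_lhs => rw [← Nat.mod_add_div m e]
    rw [pow_add, pow_mul, hz, one_pow, mul_one]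
  have hzdn : z ^ (d * n) = z := by
    rw [key (d * n), hdn, ← key 1, pow_one]
  refine ⟨hz, ?_, ?_⟩
  · rw [mul_pow, ← map_pow, ← pow_mul, mul_comm d e, pow_mul, hz, one_pow,
      map_one, mul_one, hx₀]
  · rw [map_mul, Algebra.norm_algebraMap, ← hn, ← pow_mul, hzdn, hzdef,
      mul_div_cancel₀ _ hNx0]
end

section
/- Let K/L be an extension of number fields with gcd([K:L], e) = 1 for an odd prime e, and suppose L contains a primitive e-th root of unity ζ_e. Let 𝔭 be a nonzero prime ideal of O_L, coprime to e, that is inert in K, and write 𝔓 = 𝔭O_K. Let x, x' ∈ O_K with x ∉ 𝔓, such that x^e ≡ (x')^e (mod 𝔓) and N_{K/L}(x) ≡ N_{K/L}(x') (mod 𝔭). Then x ≡ x' (mod 𝔓). -/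
/-!
Modulo `𝔓`, `x' = ω ^ j * x` for the image `ω` of `ζ`, which is still a primitive `e`-th root
of unity because `e ∉ 𝔭` and `∏_{0<i<e} (1 - ζ ^ i) = e`. The relative norm is compatible with
reduction modulo `𝔭`: writing it as a product over the `L`-embeddings of `K` into an algebraic
closure shows that `a` divides `N(y + a t) - N(y)` in `𝓞 L` for `a ∈ 𝓞 L`, `y, t ∈ 𝓞 K`.
Hence `N(x') ≡ ζ ^ (j n) N(x)` with `n = [K : L]`, and as `N(x) ∉ 𝔭` this forces `e ∣ j n`,
so `e ∣ j` and `x' ≡ x`.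
-/

open NumberField

theorem Finset.dvd_prod_add_mul_sub_prod {ι R : Type*} [CommRing R] (s : Finset ι) (a : R)
    (b z : ι → R) : a ∣ ∏ i ∈ s, (b i + a * z i) - ∏ i ∈ s, b i := by
  rw [← Ideal.mem_span_singleton, ← Ideal.Quotient.eq, map_prod, map_prod]
  refine Finset.prod_congr rfl fun i _ ↦ ?_
  rw [map_add, Ideal.Quotient.eq_zero_iff_mem.mpr
    (Ideal.mul_mem_right _ _ (Ideal.mem_span_singleton_self a)), add_zero]

theorem Ideal.Quotient.algebraMap_map_eq_zero_iff {R S : Type*} [CommRing R] [CommRing S]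
    [Algebra R S] {p : Ideal R} [p.IsMaximal] (hp : p.map (algebraMap R S) ≠ ⊤) {a : R} :
    algebraMap R (S ⧸ p.map (algebraMap R S)) a = 0 ↔ a ∈ p := by
  rw [IsScalarTower.algebraMap_apply R S, Ideal.Quotient.algebraMap_eq,
    Ideal.Quotient.eq_zero_iff_mem, ← Ideal.mem_comap, Ideal.comap_map_eq_self_of_isMaximal _ hp]

namespace IsPrimitiveRoot

variable {R : Type*} [CommRing R] [IsDomain R] {ζ : R} {n : ℕ}

theorem map_of_natCast_ne_zero {S F : Type*} [CommRing S] [FunLike F R S] [RingHomClass F R S]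
    (f : F) (hζ : IsPrimitiveRoot ζ n) (hn : (n : S) ≠ 0) : IsPrimitiveRoot (f ζ) n := by
  obtain ⟨m, rfl⟩ : ∃ m, n = m + 1 :=
    Nat.exists_eq_add_one.mpr (Nat.pos_of_ne_zero fun h ↦ hn (by simp [h]))
  refine .mk_of_lt _ m.succ_pos (by rw [← map_pow, hζ.pow_eq_one, map_one])
    fun l hl hlm hfl ↦ hn ?_
  obtain ⟨k, rfl⟩ := Nat.exists_eq_add_one.mpr hl
  -- `∏_{0<i<n} (1 - ζ^i) = n`, and the factor with `i = l` dies under `f`.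
  have hprod := congrArg f hζ.prod_one_sub_pow_eq_order
  rw [map_prod] at hprod
  rw [← map_natCast f, Nat.cast_succ, ← hprod]
  exact Finset.prod_eq_zero (i := k) (Finset.mem_range.mpr (by omega))
    (by rw [map_sub, map_one, map_pow, hfl, sub_self])

theorem exists_eq_pow_mul_of_pow_eq_pow (hζ : IsPrimitiveRoot ζ n) (hn : n ≠ 0) {a b : R}
    (h : b ^ n = a ^ n) : ∃ j, b = ζ ^ j * a := by
  have hb : b ∈ Polynomial.nthRoots n (a ^ n) :=
    (Polynomial.mem_nthRoots (Nat.pos_of_ne_zero hn)).mpr h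
  rw [hζ.nthRoots_eq rfl, Multiset.mem_map] at hb
  obtain ⟨j, -, rfl⟩ := hb
  exact ⟨j, rfl⟩

end IsPrimitiveRoot

namespace NumberField.RingOfIntegers

variable {L K : Type*} [Field L] [NumberField L] [Field K] [NumberField K] [Algebra L K]
  [FiniteDimensional L K]

theorem dvd_norm_add_mul_sub_norm (a : 𝓞 L) (y t : 𝓞 K) :
    a ∣ RingOfIntegers.norm L (y + algebraMap (𝓞 L) (𝓞 K) a * t) -
      RingOfIntegers.norm L y := by
  rcases eq_or_ne a 0 with rfl | ha
  · simp
  let E := AlgebraicClosure L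
  let conj : 𝓞 K → (K →ₐ[L] E) → integralClosure ℤ E := fun u σ ↦
    ⟨σ u, u.isIntegral_coe.map σ.toRingHom.toIntAlgHom⟩
  let α : integralClosure ℤ E :=
    ⟨algebraMap L E a, a.isIntegral_coe.map (algebraMap L E).toIntAlgHom⟩
  obtain ⟨c, hc⟩ := Finset.univ.dvd_prod_add_mul_sub_prod α (conj y) (conj t)
  set d : L := Algebra.norm L (y + algebraMap (𝓞 L) (𝓞 K) a * t : K) - Algebra.norm L (y : K)
  have hd : algebraMap L E d = algebraMap L E a * c := by
    have hcoe : ((algebraMap (𝓞 L) (𝓞 K) a : 𝓞 K) : K) = algebraMap L K a := rfl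
    rw [map_sub, Algebra.norm_eq_prod_embeddings L E, Algebra.norm_eq_prod_embeddings L E]
    simpa [conj, α, hcoe] using congrArg Subtype.val hc
  have ha' : (a : L) ≠ 0 := by exact_mod_cast ha
  have hint : IsIntegral ℤ (d / a) := by
    rw [← isIntegral_algebraMap_iff (algebraMap L E).injective, map_div₀, hd,
      mul_div_cancel_left₀ _ (by simpa using ha')]
    exact c.2
  exact ⟨⟨d / a, hint⟩, RingOfIntegers.ext (mul_div_cancel₀ d ha').symm⟩

theorem norm_add_sub_norm_mem {p : Ideal (𝓞 L)} {π : 𝓞 K}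
    (hπ : π ∈ p.map (algebraMap (𝓞 L) (𝓞 K))) (y : 𝓞 K) :
    RingOfIntegers.norm L (y + π) - RingOfIntegers.norm L y ∈ p := by
  replace hπ : π ∈ p • (⊤ : Submodule (𝓞 L) (𝓞 K)) := by
    rw [Ideal.smul_top_eq_map]
    exact hπ
  induction hπ using Submodule.smul_induction_on' generalizing y with
  | smul a ha t _ =>
    obtain ⟨m, hm⟩ := dvd_norm_add_mul_sub_norm a y t
    rw [Algebra.smul_def, hm]
    exact p.mul_mem_right m ha
  | add π₁ _ π₂ _ h₁ h₂ =>
    simpa [← add_assoc] using add_mem (h₂ (y + π₁)) (h₁ y)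

theorem norm_sub_norm_mem {p : Ideal (𝓞 L)} {y y' : 𝓞 K}
    (h : y - y' ∈ p.map (algebraMap (𝓞 L) (𝓞 K))) :
    RingOfIntegers.norm L y - RingOfIntegers.norm L y' ∈ p := by
  simpa using norm_add_sub_norm_mem h y'

theorem norm_sub_pow_finrank_mul_norm_mem {p : Ideal (𝓞 L)} {c : 𝓞 L} {x x' : 𝓞 K}
    (h : x' - algebraMap (𝓞 L) (𝓞 K) c * x ∈ p.map (algebraMap (𝓞 L) (𝓞 K))) :
    RingOfIntegers.norm L x' - c ^ Module.finrank L K * RingOfIntegers.norm L x ∈ p := by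
  have := norm_sub_norm_mem h
  rwa [map_mul, RingOfIntegers.norm_algebraMap] at this

theorem norm_notMem_of_notMem_map {p : Ideal (𝓞 L)}
    (hP : (p.map (algebraMap (𝓞 L) (𝓞 K))).IsMaximal)
    {x : 𝓞 K} (hx : x ∉ p.map (algebraMap (𝓞 L) (𝓞 K))) : RingOfIntegers.norm L x ∉ p := by
  obtain ⟨w, i, hi, hwx⟩ := hP.exists_inv hx
  have hwx' : w * x - 1 ∈ p.map (algebraMap (𝓞 L) (𝓞 K)) := by
    rw [← hwx, sub_add_cancel_left]
    exact neg_mem hi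
  have hunit := norm_sub_norm_mem (L := L) hwx'
  rw [map_mul, map_one] at hunit
  intro hxp
  have hone : (1 : 𝓞 L) ∈ p := by
    simpa using sub_mem (p.mul_mem_left (RingOfIntegers.norm L w) hxp) hunit
  exact hP.ne_top (by rw [(Ideal.eq_top_iff_one p).mpr hone, Ideal.map_top])

theorem pow_finrank_sub_one_mem_of_norm_sub_norm_mem {p : Ideal (𝓞 L)} [p.IsPrime]
    (hP : (p.map (algebraMap (𝓞 L) (𝓞 K))).IsMaximal) {c : 𝓞 L} {x x' : 𝓞 K}
    (hx : x ∉ p.map (algebraMap (𝓞 L) (𝓞 K)))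
    (hc : x' - algebraMap (𝓞 L) (𝓞 K) c * x ∈ p.map (algebraMap (𝓞 L) (𝓞 K)))
    (hN : RingOfIntegers.norm L x - RingOfIntegers.norm L x' ∈ p) :
    c ^ Module.finrank L K - 1 ∈ p := by
  have h : (c ^ Module.finrank L K - 1) * RingOfIntegers.norm L x ∈ p := by
    simpa [sub_mul] using neg_mem (add_mem hN (norm_sub_pow_finrank_mul_norm_mem hc))
  exact (Ideal.IsPrime.mem_or_mem ‹_› h).resolve_right (norm_notMem_of_notMem_map hP hx)

end NumberField.RingOfIntegers

theorem couveignes_residue_uniqueness_general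
    (L K : Type*) [Field L] [NumberField L] [Field K] [NumberField K]
    [Algebra L K] [FiniteDimensional L K]
    (e : ℕ)
    (hgcd : Nat.gcd (Module.finrank L K) e = 1)
    (ζ : L) (hζ : IsPrimitiveRoot ζ e)
    (p : Ideal (𝓞 L)) (hp : p.IsPrime) (hbot : p ≠ ⊥)
    (hpe : (e : 𝓞 L) ∉ p)
    (hinert : (Ideal.map (algebraMap (𝓞 L) (𝓞 K)) p).IsPrime)
    (x x' : 𝓞 K) (hx : x ∉ Ideal.map (algebraMap (𝓞 L) (𝓞 K)) p)
    (hee : x ^ e - x' ^ e ∈ Ideal.map (algebraMap (𝓞 L) (𝓞 K)) p)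
    (nx nx' : 𝓞 L)
    (hnx : algebraMap (𝓞 L) L nx = Algebra.norm L (algebraMap (𝓞 K) K x))
    (hnx' : algebraMap (𝓞 L) L nx' = Algebra.norm L (algebraMap (𝓞 K) K x'))
    (hnorm : nx - nx' ∈ p) :
    x - x' ∈ Ideal.map (algebraMap (𝓞 L) (𝓞 K)) p := by
  set P := p.map (algebraMap (𝓞 L) (𝓞 K))
  have he : e ≠ 0 := by
    rintro rfl
    simp at hpe
  have hpmax := hp.isMaximal hbot
  have hf {a : 𝓞 L} : algebraMap (𝓞 L) (𝓞 K ⧸ P) a = 0 ↔ a ∈ p :=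
    Ideal.Quotient.algebraMap_map_eq_zero_iff hinert.ne_top
  have hPmax : P.IsMaximal := Ideal.isMaximal_of_isIntegral_of_isMaximal_comap P
    (by rwa [Ideal.comap_map_eq_self_of_isMaximal _ hinert.ne_top])
  let ζ' : 𝓞 L := ⟨ζ, hζ.isIntegral (Nat.pos_of_ne_zero he)⟩
  have hω : IsPrimitiveRoot (algebraMap (𝓞 L) (𝓞 K ⧸ P) ζ') e :=
    (hζ.of_map_of_injective RingOfIntegers.coe_injective).map_of_natCast_ne_zero _
      (by rwa [← map_natCast (algebraMap (𝓞 L) (𝓞 K ⧸ P)), Ne, hf])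
  obtain ⟨j, hj⟩ := hω.exists_eq_pow_mul_of_pow_eq_pow he
    (b := Ideal.Quotient.mk P x') (a := Ideal.Quotient.mk P x)
    (by rw [← map_pow, ← map_pow]; exact (Ideal.Quotient.eq.mpr hee).symm)
  obtain rfl : nx = RingOfIntegers.norm L x := RingOfIntegers.ext hnx
  obtain rfl : nx' = RingOfIntegers.norm L x' := RingOfIntegers.ext hnx'
  have hζx : x' - algebraMap (𝓞 L) (𝓞 K) (ζ' ^ j) * x ∈ P :=
    Ideal.Quotient.eq.mp (by simpa using hj)
  have hjn : algebraMap (𝓞 L) (𝓞 K ⧸ P) ζ' ^ (j * Module.finrank L K) = 1 := by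
    have := RingOfIntegers.pow_finrank_sub_one_mem_of_norm_sub_norm_mem hPmax hx hζx hnorm
    rwa [← hf, map_sub, map_one, sub_eq_zero, map_pow, map_pow, ← pow_mul] at this
  have hj1 : algebraMap (𝓞 L) (𝓞 K ⧸ P) ζ' ^ j = 1 := hω.pow_eq_one_iff_dvd j |>.mpr <|
    (Nat.Coprime.symm hgcd).dvd_of_dvd_mul_right (hω.dvd_of_pow_eq_one _ hjn)
  rw [hj1, one_mul] at hj
  exact Ideal.Quotient.eq.mp hj.symm

theorem couveignes_residue_uniqueness
    (L K : Type*) [Field L] [NumberField L] [Field K] [NumberField K]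
    [Algebra L K] [FiniteDimensional L K]
    (e : ℕ) (he : e.Prime) (hodd : Odd e)
    (hgcd : Nat.gcd (Module.finrank L K) e = 1)
    (ζ : L) (hζ : IsPrimitiveRoot ζ e)
    (p : Ideal (𝓞 L)) (hp : p.IsPrime) (hbot : p ≠ ⊥)
    (hpe : (e : 𝓞 L) ∉ p)
    (hinert : (Ideal.map (algebraMap (𝓞 L) (𝓞 K)) p).IsPrime)
    (x x' : 𝓞 K) (hx : x ∉ Ideal.map (algebraMap (𝓞 L) (𝓞 K)) p)
    (hee : x ^ e - x' ^ e ∈ Ideal.map (algebraMap (𝓞 L) (𝓞 K)) p)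
    (nx nx' : 𝓞 L)
    (hnx : algebraMap (𝓞 L) L nx = Algebra.norm L (algebraMap (𝓞 K) K x))
    (hnx' : algebraMap (𝓞 L) L nx' = Algebra.norm L (algebraMap (𝓞 K) K x'))
    (hnorm : nx - nx' ∈ p) :
    x - x' ∈ Ideal.map (algebraMap (𝓞 L) (𝓞 K)) p :=
  couveignes_residue_uniqueness_general L K e hgcd ζ hζ p hp hbot hpe hinert x x' hx hee nx nx' hnx
    hnx' hnorm
end
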